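/- (Radial singular Alexandrov–Bol inequality.) Let α ∈ [0,1), R > 0, and let g : [0,R] → ℝ satisfy the interior radial Bol hypothesis with parameter α. Set M = 2π∫₀^R s^{1−2α} e^{g(s)} ds. Then ( 2π R^{1−α} e^{g(R)/2} )² ≥ (1/2) · M · ( 8π(1−α) − M ). -/

import Mathlib

open Real MeasureTheory Metric Filter Topology RealInnerProductSpace

noncomputable section

/-- The plane `ℝ²`. -/
abbrev Pl := EuclideanSpace ℝ (Fin 2)

/-- The Laplacian `Δu = ∂²u/∂x₁² + ∂²u/∂x₂²` of a function on `ℝ²`. -/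
def lap (u : Pl → ℝ) (x : Pl) : ℝ :=
  ∑ i : Fin 2, fderiv ℝ (fun y => fderiv ℝ u y (EuclideanSpace.single i 1)) x
    (EuclideanSpace.single i 1)

/-- `g` satisfies the interior radial Bol hypothesis with parameter `a` on `[0,R]`:
it is continuous and strictly decreasing on `[0,R]`, differentiable on `(0,R)`, and
`2πr·(−g'(r)) ≤ 2π∫₀^r s^{1−2a} e^{g(s)} ds` for every `r ∈ (0,R)`. -/
def InteriorBol (a R : ℝ) (g : ℝ → ℝ) : Prop :=
  ContinuousOn g (Set.Icc 0 R) ∧ StrictAntiOn g (Set.Icc 0 R) ∧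
  (∀ r ∈ Set.Ioo (0:ℝ) R, DifferentiableAt ℝ g r) ∧
  (∀ r ∈ Set.Ioo (0:ℝ) R,
    2 * π * r * (-(deriv g r)) ≤ 2 * π * ∫ s in (0:ℝ)..r, s ^ (1 - 2*a) * Real.exp (g s))

/-!
With `β = 1 - 2α` and `m(r) = ∫₀^r s^β e^{g(s)} ds`, the function
`F(r) = r^{β+1} e^{g(r)} - (β + 1) m(r) + m(r)² / 2` vanishes at `0` and has derivative
`r^β e^{g(r)} (r g'(r) + m(r))`, which the Bol hypothesis makes nonnegative.
Hence `F(R) ≥ 0`, and this is the inequality divided by `4π²`.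
-/
namespace RadialBol

variable {β R : ℝ} {g : ℝ → ℝ}

def mass (β : ℝ) (g : ℝ → ℝ) (r : ℝ) : ℝ := ∫ s in (0:ℝ)..r, s ^ β * exp (g s)

def bolFunctional (β : ℝ) (g : ℝ → ℝ) (r : ℝ) : ℝ :=
  r ^ (β + 1) * exp (g r) - (β + 1) * mass β g r + mass β g r ^ 2 / 2

lemma intervalIntegrable_rpow_mul_exp (hβ : -1 < β) (hg : ContinuousOn g (Set.Icc 0 R))
    (hR : 0 ≤ R) : IntervalIntegrable (fun s => s ^ β * exp (g s)) volume 0 R :=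
  (intervalIntegral.intervalIntegrable_rpow' hβ).mul_continuousOn <| by
    rw [Set.uIcc_of_le hR]
    exact continuous_exp.comp_continuousOn hg

lemma continuousOn_mass (hβ : -1 < β) (hg : ContinuousOn g (Set.Icc 0 R)) (hR : 0 ≤ R) :
    ContinuousOn (mass β g) (Set.Icc 0 R) := by
  have h := intervalIntegral.continuousOn_primitive_interval'
    (intervalIntegrable_rpow_mul_exp hβ hg hR) Set.left_mem_uIcc
  rwa [Set.uIcc_of_le hR] at h

lemma hasDerivAt_mass (hβ : -1 < β) (hg : ContinuousOn g (Set.Icc 0 R)) {r : ℝ}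
    (hr : r ∈ Set.Ioo 0 R) : HasDerivAt (mass β g) (r ^ β * exp (g r)) r := by
  have hpow : ContinuousOn (fun s : ℝ => s ^ β) (Set.Ioo 0 R) := fun s hs =>
    (continuousAt_rpow_const s β (Or.inl hs.1.ne')).continuousWithinAt
  have hcont : ContinuousOn (fun s => s ^ β * exp (g s)) (Set.Ioo 0 R) :=
    hpow.mul (continuous_exp.comp_continuousOn (hg.mono Set.Ioo_subset_Icc_self))
  exact intervalIntegral.integral_hasDerivAt_right
    (intervalIntegrable_rpow_mul_exp hβ (hg.mono (Set.Icc_subset_Icc_right hr.2.le)) hr.1.le)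
    (hcont.stronglyMeasurableAtFilter isOpen_Ioo r hr)
    (hcont.continuousAt (isOpen_Ioo.mem_nhds hr))

lemma continuousOn_bolFunctional (hβ : -1 < β) (hg : ContinuousOn g (Set.Icc 0 R))
    (hR : 0 ≤ R) : ContinuousOn (bolFunctional β g) (Set.Icc 0 R) := by
  have hpow : ContinuousOn (fun r : ℝ => r ^ (β + 1)) (Set.Icc 0 R) := fun r _ =>
    (continuousAt_rpow_const r _ (Or.inr (by linarith))).continuousWithinAt
  have hm := continuousOn_mass hβ hg hR
  exact ((hpow.mul (continuous_exp.comp_continuousOn hg)).sub (continuousOn_const.mul hm)).add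
    ((hm.pow 2).div_const 2)

/-- The terms `(β + 1) r^β e^g` coming from `r^(β+1)` and from `(β + 1) m` cancel. -/
lemma hasDerivAt_bolFunctional (hβ : -1 < β) (hg : ContinuousOn g (Set.Icc 0 R)) {r : ℝ}
    (hr : r ∈ Set.Ioo 0 R) (hgr : DifferentiableAt ℝ g r) :
    HasDerivAt (bolFunctional β g)
      (r ^ β * exp (g r) * (r * deriv g r + mass β g r)) r := by
  have hpow : HasDerivAt (fun x : ℝ => x ^ (β + 1)) ((β + 1) * r ^ β) r := by
    simpa using hasDerivAt_rpow_const (p := β + 1) (Or.inl hr.1.ne')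
  have hm := hasDerivAt_mass hβ hg hr
  refine (((hpow.mul hgr.hasDerivAt.exp).sub (hm.const_mul (β + 1))).add
    ((hm.pow 2).div_const 2)).congr_deriv ?_
  rw [rpow_add hr.1, rpow_one]
  ring

lemma monotoneOn_bolFunctional (hβ : -1 < β) (hR : 0 ≤ R) (hg : ContinuousOn g (Set.Icc 0 R))
    (hgd : ∀ r ∈ Set.Ioo 0 R, DifferentiableAt ℝ g r)
    (hbol : ∀ r ∈ Set.Ioo 0 R, -(r * deriv g r) ≤ mass β g r) :
    MonotoneOn (bolFunctional β g) (Set.Icc 0 R) := by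
  refine monotoneOn_of_hasDerivWithinAt_nonneg
    (f' := fun r => r ^ β * exp (g r) * (r * deriv g r + mass β g r)) (convex_Icc 0 R)
    (continuousOn_bolFunctional hβ hg hR) (fun r hr => ?_) (fun r hr => ?_)
  · rw [interior_Icc] at hr ⊢
    exact (hasDerivAt_bolFunctional hβ hg hr (hgd r hr)).hasDerivWithinAt
  · rw [interior_Icc] at hr
    have := hbol r hr
    exact mul_nonneg (mul_nonneg (rpow_nonneg hr.1.le _) (exp_nonneg _)) (by linarith)

lemma bolFunctional_zero (hβ : β + 1 ≠ 0) : bolFunctional β g 0 = 0 := by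
  simp [bolFunctional, mass, zero_rpow hβ]

theorem mass_mul_sub_mass_le_rpow_mul_exp (hβ : -1 < β) (hR : 0 ≤ R)
    (hg : ContinuousOn g (Set.Icc 0 R))
    (hgd : ∀ r ∈ Set.Ioo 0 R, DifferentiableAt ℝ g r)
    (hbol : ∀ r ∈ Set.Ioo 0 R, -(r * deriv g r) ≤ mass β g r) :
    mass β g R * (2 * (β + 1) - mass β g R) / 2 ≤ R ^ (β + 1) * exp (g R) := by
  have h := monotoneOn_bolFunctional hβ hR hg hgd hbol (Set.left_mem_Icc.2 hR)
    (Set.right_mem_Icc.2 hR) hR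
  rw [bolFunctional_zero (by linarith), bolFunctional] at h
  linarith

end RadialBol

open RadialBol in
/-- Radial singular Alexandrov–Bol inequality. -/
theorem radial_singular_bol (a R : ℝ) (ha : a ∈ Set.Ico (0:ℝ) 1) (hR : 0 < R)
    (g : ℝ → ℝ) (hg : InteriorBol a R g) :
    (2 * π * R ^ (1-a) * Real.exp (g R / 2)) ^ 2 ≥
      (1/2) * (2 * π * ∫ s in (0:ℝ)..R, s ^ (1 - 2*a) * Real.exp (g s)) *
        (8 * π * (1 - a) - 2 * π * ∫ s in (0:ℝ)..R, s ^ (1 - 2*a) * Real.exp (g s)) := by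
  obtain ⟨hgc, -, hgd, hbol⟩ := hg
  have hbol' : ∀ r ∈ Set.Ioo 0 R, -(r * deriv g r) ≤ mass (1 - 2 * a) g r := fun r hr =>
    le_of_mul_le_mul_left (by rw [mass]; linarith [hbol r hr]) two_pi_pos
  have key := mass_mul_sub_mass_le_rpow_mul_exp (by linarith [ha.2]) hR.le hgc hgd hbol'
  have hsq : (2 * π * R ^ (1 - a) * exp (g R / 2)) ^ 2
      = 4 * π ^ 2 * (R ^ (1 - 2 * a + 1) * exp (g R)) := by
    have hpow : (R ^ (1 - a)) ^ 2 = R ^ (1 - 2 * a + 1) := by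
      rw [← rpow_mul_natCast hR.le]
      ring_nf
    rw [mul_pow, mul_pow, hpow, sq (exp _), ← exp_add, add_halves]
    ring
  rw [ge_iff_le, hsq]
  calc _ = 4 * π ^ 2 *
          (mass (1 - 2 * a) g R * (2 * (1 - 2 * a + 1) - mass (1 - 2 * a) g R) / 2) := by
        rw [mass]; ring
    _ ≤ _ := by gcongr
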